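/- (Lemma 2, finite table.) Let P ⊂ ℝ² be an open parallelogram P = {t·u + s·v : 0 < t, s < 1} (u, v linearly independent) that contains at least one unit-length segment, let c : P → Fin k be measurable, let c̃ be the periodic extension of c to the plane (periodic with periods u and v, agreeing with c on P up to a null set), and let p^table(c) be the conditional probability that c(A) = c(B) given B ∈ P, where A is uniform in P, θ is uniform in [0, 2π) independent of A, and B = A + (cos θ, sin θ). Then |p^per(c̃) − p^table(c)| ≤ 2 · Area(K(P,1)) / Area(P), where K(P,1) = {z ∈ P : dist(z, ℝ² \ P) < 1} is the 1-wide inner border of P. -/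

import Mathlib

open MeasureTheory Real

noncomputable section

abbrev Plane := EuclideanSpace ℝ (Fin 2)

def vec (x y : ℝ) : Plane := (WithLp.equiv 2 (Fin 2 → ℝ)).symm ![x, y]

def dir (θ : ℝ) : Plane := vec (Real.cos θ) (Real.sin θ)

/-- The fundamental parallelogram `{t•u + s•v : 0 ≤ t, s < 1}`. -/
def para (u v : Plane) : Set Plane :=
  {x | ∃ t s : ℝ, 0 ≤ t ∧ t < 1 ∧ 0 ≤ s ∧ s < 1 ∧ x = t • u + s • v}

/-- `p^per(c)` for a periodic coloring with fundamental parallelogram `para u v`. -/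
def pper {k : ℕ} (c : Plane → Fin k) (u v : Plane) : ℝ :=
  (1 / (2 * π * (volume (para u v)).toReal)) *
    ∫ a in para u v, ∫ θ in (0:ℝ)..(2*π),
      (if c a = c (a + dir θ) then (1:ℝ) else 0)

/-- The square `[-R, R]²`. -/
def square (R : ℝ) : Set Plane := {x | x 0 ∈ Set.Icc (-R) R ∧ x 1 ∈ Set.Icc (-R) R}

-- `p^table(c)` on the "table" `P`: the conditional probability that both endpoints of a
-- random needle have the same color, given that the second endpoint also lands in `P`.
open Classical in
def ptableSet {k : ℕ} (c : Plane → Fin k) (P : Set Plane) : ℝ :=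
  (∫ a in P, ∫ θ in (0:ℝ)..(2*π),
      (if c a = c (a + dir θ) ∧ a + dir θ ∈ P then (1:ℝ) else 0)) /
  (∫ a in P, ∫ θ in (0:ℝ)..(2*π), (if a + dir θ ∈ P then (1:ℝ) else 0))

/-- `p^table_R(c)`, on the square table `[-R, R]²`. -/
def ptable {k : ℕ} (c : Plane → Fin k) (R : ℝ) : ℝ := ptableSet c (square R)

/-- The open parallelogram `{t•u + s•v : 0 < t, s < 1}`. -/
def paraOpen (u v : Plane) : Set Plane :=
  {x | ∃ t s : ℝ, 0 < t ∧ t < 1 ∧ 0 < s ∧ s < 1 ∧ x = t • u + s • v}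

/-- `K(P, r)`: the `r`-wide inner border of `P`. -/
def innerBorder (P : Set Plane) (r : ℝ) : Set Plane :=
  {z ∈ P | Metric.infDist z Pᶜ < r}

/-!
Off the unit-wide border `K = K(P,1)`, a point `a ∈ P` sees the whole unit circle around it inside
`closure P`; since the frontier of the convex set `P` is null, for almost every `a` and almost every
direction `θ` the needle end `a + e_θ` lies in `P`, where `c̃ = c`. So off `K` the per-point integrands
of `p^per(c̃)` and of the numerator of `p^table(c)` agree, and the integrand `1[a + e_θ ∈ P]` of the
denominator is `1`. Writing `T = 2π·Area(P)`, the numerators `N₁, N₂` and the denominator `D` thus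
satisfy `|N₁ - N₂| ≤ 2π·Area(K)` and `T - D ≤ 2π·Area(K)`, and
`|N₁/T - N₂/D| ≤ |N₁ - N₂|/T + (N₂/D)·(T - D)/T` with `N₂ ≤ D` gives the bound.
-/

-- If `D = 0` then also `N₂ = 0`, so `N₂ / D = 0` and the bound holds because `T ≤ E`.
lemma abs_div_sub_div_le {N₁ N₂ D T E : ℝ} (hN₂ : 0 ≤ N₂) (hN₂D : N₂ ≤ D) (hDT : D ≤ T)
    (h₁ : |N₁ - N₂| ≤ E) (h₂ : T - D ≤ E) : |N₁ / T - N₂ / D| ≤ 2 * E / T := by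
  have hE : 0 ≤ E := (abs_nonneg _).trans h₁
  rcases (hN₂.trans hN₂D).eq_or_lt with hD | hD
  · obtain rfl : N₂ = 0 := le_antisymm (hD ▸ hN₂D) hN₂
    rw [sub_zero] at h₁
    rw [zero_div, sub_zero, abs_div, abs_of_nonneg (hN₂D.trans hDT)]
    exact div_le_div_of_nonneg_right (by linarith) (hN₂D.trans hDT)
  have hT : 0 < T := hD.trans_le hDT
  have hcorr : 0 ≤ N₂ / D * ((T - D) / T) :=
    mul_nonneg (div_nonneg hN₂ hD.le) (div_nonneg (sub_nonneg.2 hDT) hT.le)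
  calc |N₁ / T - N₂ / D| = |(N₁ - N₂) / T - N₂ / D * ((T - D) / T)| := by
        congr 1; field_simp; ring
    _ ≤ |(N₁ - N₂) / T| + |N₂ / D * ((T - D) / T)| := abs_sub _ _
    _ = |N₁ - N₂| / T + N₂ / D * ((T - D) / T) := by
        rw [abs_div, abs_of_pos hT, abs_of_nonneg hcorr]
    _ ≤ E / T + 1 * (E / T) := by gcongr; exact (div_le_one hD).2 hN₂D
    _ = 2 * E / T := by ring

section SetIntegral
variable {α : Type*} [MeasurableSpace α] {μ : Measure α} {s t : Set α} {f g : α → ℝ} {M : ℝ}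

lemma abs_setIntegral_sub_le (hf : IntegrableOn f s μ) (hg : IntegrableOn g s μ)
    (hs : MeasurableSet s) (hts : t ⊆ s) (ht : μ t < ⊤) (hM : ∀ x ∈ t, |f x - g x| ≤ M)
    (hfg : ∀ᵐ x ∂μ.restrict s, x ∉ t → f x = g x) :
    |∫ x in s, f x ∂μ - ∫ x in s, g x ∂μ| ≤ M * μ.real t := by
  have hdiff : ∫ x in s, (f x - g x) ∂μ = ∫ x in t, (f x - g x) ∂μ := by
    refine setIntegral_eq_of_subset_of_ae_sdiff_eq_zero hs.nullMeasurableSet hts ?_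
    filter_upwards [(ae_restrict_iff' hs).1 hfg] with x hx hxst
    rw [hx hxst.1 hxst.2, sub_self]
  rw [← integral_sub hf hg, hdiff]
  exact norm_setIntegral_le_of_norm_le_const (f := fun x => f x - g x) ht hM

end SetIntegral

section Ratio
variable {α β : Type*} [MeasurableSpace α] [MeasurableSpace β] {μ : Measure α} {ν : Measure β}
  [IsFiniteMeasure ν] {P K : Set α} {F F₁ F₂ F₃ : α × β → ℝ}

lemma integral_mem_Icc_of_mem_Icc {f : β → ℝ} (hf : ∀ b, f b ∈ Set.Icc 0 1) :
    ∫ b, f b ∂ν ∈ Set.Icc 0 (ν.real Set.univ) := by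
  refine ⟨integral_nonneg fun b => (hf b).1, (le_abs_self _).trans ?_⟩
  simpa using norm_integral_le_of_norm_le_const (μ := ν) (C := 1)
    (.of_forall fun b => (Real.norm_of_nonneg (hf b).1).trans_le (hf b).2)

lemma integrable_of_mem_Icc {f : β → ℝ} (hf : Measurable f) (h01 : ∀ b, f b ∈ Set.Icc 0 1) :
    Integrable f ν :=
  .of_bound hf.aestronglyMeasurable 1
    (.of_forall fun b => (Real.norm_of_nonneg (h01 b).1).trans_le (h01 b).2)

lemma integrableOn_integral_right (hF : Measurable F) (hF01 : ∀ q, F q ∈ Set.Icc 0 1)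
    (hPfin : μ P < ⊤) : IntegrableOn (fun a => ∫ b, F (a, b) ∂ν) P μ := by
  refine Measure.integrableOn_of_bounded (M := ν.real Set.univ) hPfin.ne
    hF.stronglyMeasurable.integral_prod_right'.aestronglyMeasurable (.of_forall fun a => ?_)
  have h := integral_mem_Icc_of_mem_Icc (ν := ν) fun b => hF01 (a, b)
  exact (Real.norm_of_nonneg h.1).trans_le h.2

theorem abs_div_sub_div_le_of_ae_eq_off [NeZero ν] (hP : MeasurableSet P) (hPfin : μ P < ⊤)
    (hKP : K ⊆ P) (hF₁ : Measurable F₁) (hF₂ : Measurable F₂) (hF₃ : Measurable F₃)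
    (hF₁01 : ∀ q, F₁ q ∈ Set.Icc 0 1) (hF₂01 : ∀ q, F₂ q ∈ Set.Icc 0 1)
    (hF₃01 : ∀ q, F₃ q ∈ Set.Icc 0 1) (hF₂₃ : F₂ ≤ F₃)
    (hoff : ∀ᵐ a ∂μ.restrict P, a ∉ K → ∀ᵐ b ∂ν, F₁ (a, b) = F₂ (a, b) ∧ F₃ (a, b) = 1) :
    |(∫ a in P, ∫ b, F₁ (a, b) ∂ν ∂μ) / (ν.real Set.univ * μ.real P) -
        (∫ a in P, ∫ b, F₂ (a, b) ∂ν ∂μ) / (∫ a in P, ∫ b, F₃ (a, b) ∂ν ∂μ)| ≤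
      2 * μ.real K / μ.real P := by
  set T := ν.real Set.univ
  have hKfin : μ K < ⊤ := (measure_mono hKP).trans_lt hPfin
  have hint₁ := integrableOn_integral_right (ν := ν) hF₁ hF₁01 hPfin
  have hint₂ := integrableOn_integral_right (ν := ν) hF₂ hF₂01 hPfin
  have hint₃ := integrableOn_integral_right (ν := ν) hF₃ hF₃01 hPfin
  have hbound {F : α × β → ℝ} (hF01 : ∀ q, F q ∈ Set.Icc 0 1) (a : α) :
      ∫ b, F (a, b) ∂ν ∈ Set.Icc 0 T :=
    integral_mem_Icc_of_mem_Icc fun b => hF01 (a, b)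
  have hconst : ∫ _ in P, T ∂μ = T * μ.real P := by
    rw [setIntegral_const, smul_eq_mul, mul_comm]
  have hoff' : ∀ᵐ a ∂μ.restrict P, a ∉ K →
      ∫ b, F₁ (a, b) ∂ν = ∫ b, F₂ (a, b) ∂ν ∧ T = ∫ b, F₃ (a, b) ∂ν := by
    filter_upwards [hoff] with a ha haK
    refine ⟨integral_congr_ae ((ha haK).mono fun b hb => hb.1), ?_⟩
    rw [integral_congr_ae ((ha haK).mono fun b hb => hb.2), integral_const, smul_eq_mul, mul_one]
  have hN₂ : 0 ≤ ∫ a in P, ∫ b, F₂ (a, b) ∂ν ∂μ :=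
    setIntegral_nonneg hP fun a _ => (hbound hF₂01 a).1
  have hN₂D : ∫ a in P, ∫ b, F₂ (a, b) ∂ν ∂μ ≤ ∫ a in P, ∫ b, F₃ (a, b) ∂ν ∂μ :=
    setIntegral_mono hint₂ hint₃ fun a => integral_mono
      (integrable_of_mem_Icc (hF₂.comp measurable_prodMk_left) fun b => hF₂01 (a, b))
      (integrable_of_mem_Icc (hF₃.comp measurable_prodMk_left) fun b => hF₃01 (a, b))
      fun b => hF₂₃ (a, b)
  have hDT : ∫ a in P, ∫ b, F₃ (a, b) ∂ν ∂μ ≤ T * μ.real P :=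
    hconst ▸ setIntegral_mono_on hint₃ (integrableOn_const hPfin.ne) hP
      fun a _ => (hbound hF₃01 a).2
  have h₁ := abs_setIntegral_sub_le hint₁ hint₂ hP hKP hKfin
    (fun a _ => abs_sub_le_of_nonneg_of_le (hbound hF₁01 a).1 (hbound hF₁01 a).2
      (hbound hF₂01 a).1 (hbound hF₂01 a).2) (hoff'.mono fun a ha haK => (ha haK).1)
  have h₂ := abs_setIntegral_sub_le (integrableOn_const hPfin.ne) hint₃ hP hKP hKfin
    (fun a _ => abs_sub_le_of_nonneg_of_le measureReal_nonneg le_rfl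
      (hbound hF₃01 a).1 (hbound hF₃01 a).2) (hoff'.mono fun a ha haK => (ha haK).2)
  rw [hconst] at h₂
  calc _ ≤ 2 * (T * μ.real K) / (T * μ.real P) :=
        abs_div_sub_div_le hN₂ hN₂D hDT h₁ ((le_abs_self _).trans h₂)
    _ = 2 * μ.real K / μ.real P := by
        rw [mul_left_comm, mul_div_mul_left _ _ measureReal_univ_ne_zero]

end Ratio

lemma continuous_dir : Continuous dir := by
  have h : Continuous fun θ : ℝ => (![Real.cos θ, Real.sin θ] : Fin 2 → ℝ) := by
    apply continuous_pi; intro i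
    fin_cases i <;> simp [Real.continuous_cos, Real.continuous_sin]
  exact (PiLp.continuous_toLp (p := 2) (β := fun _ : Fin 2 => ℝ)).comp h

lemma norm_dir (θ : ℝ) : ‖dir θ‖ = 1 := by
  rw [EuclideanSpace.norm_eq, Real.sqrt_eq_one]
  simp [dir, vec, Fin.sum_univ_two]

lemma ae_ae_add_notMem {G β : Type*} [AddGroup G] [MeasurableSpace G] [MeasurableAdd₂ G]
    [MeasurableSpace β] {μ : Measure G} [μ.IsAddRightInvariant] [SFinite μ] {ν : Measure β}
    [SFinite ν] {f : β → G} (hf : Measurable f) {S : Set G} (hS : μ S = 0) :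
    ∀ᵐ a ∂μ, ∀ᵐ b ∂ν, a + f b ∉ S := by
  obtain ⟨S', hSS', hS'm, hS'0⟩ := exists_measurable_superset_of_null hS
  have hS' : ∀ᵐ a ∂μ, ∀ᵐ b ∂ν, a + f b ∉ S' := by
    rw [Measure.ae_ae_comm ((measurable_fst.add (hf.comp measurable_snd)) hS'm).compl]
    refine .of_forall fun b => ?_
    rw [ae_iff]
    simp only [not_not]
    exact (measure_preimage_add_right μ (f b) S').trans hS'0
  filter_upwards [hS'] with a ha
  filter_upwards [ha] with b hb h
  exact hb (hSS' h)

lemma mem_of_notMem_innerBorder {P : Set Plane} {a x : Plane} (ha : a ∈ P)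
    (haK : a ∉ innerBorder P 1) (hx : dist x a ≤ 1) (hxP : x ∉ frontier P) : x ∈ P := by
  have hball : Metric.ball a 1 ⊆ P := fun y hy => by
    by_contra hyP
    exact haK ⟨ha, (Metric.infDist_le_dist_of_mem hyP).trans_lt (Metric.mem_ball'.1 hy)⟩
  have hcl : x ∈ closure P := closure_mono hball <| by
    rwa [closure_ball a one_ne_zero, Metric.mem_closedBall]
  by_contra hx'
  exact hxP ⟨hcl, fun h => hx' (interior_subset h)⟩

theorem abs_sub_ptableSet_le {k : ℕ} {P : Set Plane} (hP : MeasurableSet P)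
    (hPfin : volume P < ⊤) (hfr : volume (frontier P) = 0) {c c' : Plane → Fin k}
    (hc : Measurable c) (hc' : Measurable c') (hcc' : ∀ᵐ x ∂volume.restrict P, c' x = c x) :
    |(∫ a in P, ∫ θ in (0:ℝ)..(2*π), if c' a = c' (a + dir θ) then (1:ℝ) else 0) /
        (2 * π * (volume P).toReal) - ptableSet c P| ≤
      2 * (volume (innerBorder P 1)).toReal / (volume P).toReal := by
  classical
  set ν := volume.restrict (Set.Ioc 0 (2 * π))
  have : NeZero ν := ⟨by simp [ν, pi_pos]⟩
  have hν : ν.real Set.univ = 2 * π := by simp [ν, pi_pos.le]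
  have hneedle : Measurable fun q : Plane × ℝ => q.1 + dir q.2 :=
    measurable_fst.add (continuous_dir.measurable.comp measurable_snd)
  have hind {p : Plane × ℝ → Prop} [DecidablePred p] (q : Plane × ℝ) :
      (if p q then (1:ℝ) else 0) ∈ Set.Icc 0 1 := by
    split_ifs <;> norm_num
  have hbad : volume ({x | ¬(x ∈ P → c' x = c x)} ∪ frontier P) = 0 :=
    measure_union_null (ae_iff.1 ((ae_restrict_iff' hP).1 hcc')) hfr
  have hoff : ∀ᵐ a ∂volume.restrict P, a ∉ innerBorder P 1 → ∀ᵐ θ ∂ν,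
      (if c' a = c' (a + dir θ) then (1:ℝ) else 0) =
        (if c a = c (a + dir θ) ∧ a + dir θ ∈ P then 1 else 0) ∧
      (if a + dir θ ∈ P then (1:ℝ) else 0) = 1 := by
    filter_upwards [ae_restrict_of_ae (ae_ae_add_notMem (ν := ν) continuous_dir.measurable hbad),
      hcc', ae_restrict_mem hP] with a ha hca haP haK
    filter_upwards [ha] with θ hθ
    have hmem : a + dir θ ∈ P := mem_of_notMem_innerBorder haP haK
      (by rw [dist_self_add_left, norm_dir]) fun h => hθ (Or.inr h)
    have hcθ : c' (a + dir θ) = c (a + dir θ) := by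
      by_contra h
      exact hθ (Or.inl fun h' => h (h' hmem))
    simp [hca, hcθ, hmem]
  have key := abs_div_sub_div_le_of_ae_eq_off (ν := ν) (K := innerBorder P 1)
    (F₁ := fun q => if c' q.1 = c' (q.1 + dir q.2) then 1 else 0)
    (F₂ := fun q => if c q.1 = c (q.1 + dir q.2) ∧ q.1 + dir q.2 ∈ P then 1 else 0)
    (F₃ := fun q => if q.1 + dir q.2 ∈ P then 1 else 0) hP hPfin (fun _ h => h.1)
    (Measurable.ite (measurableSet_eq_fun (hc'.comp measurable_fst) (hc'.comp hneedle))
      measurable_const measurable_const)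
    (Measurable.ite ((measurableSet_eq_fun (hc.comp measurable_fst) (hc.comp hneedle)).inter
      (hneedle hP)) measurable_const measurable_const)
    (Measurable.ite (hneedle hP) measurable_const measurable_const)
    hind hind hind (fun q => by dsimp only; split_ifs <;> simp_all) hoff
  rw [hν] at key
  simp only [ptableSet, intervalIntegral.integral_of_le two_pi_pos.le]
  exact key

section Parallelogram
variable {u v : Plane}

def pairBasis (huv : LinearIndependent ℝ ![u, v]) : Module.Basis (Fin 2) ℝ Plane :=
  basisOfLinearIndependentOfCardEqFinrank huv (by simp)

lemma paraOpen_eq_preimage (huv : LinearIndependent ℝ ![u, v]) :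
    paraOpen u v = (pairBasis huv).equivFun ⁻¹' Set.univ.pi fun _ => Set.Ioo 0 1 := by
  have hB : ⇑(pairBasis huv) = ![u, v] := coe_basisOfLinearIndependentOfCardEqFinrank _ _
  have hsymm (t s : ℝ) : (pairBasis huv).equivFun.symm ![t, s] = t • u + s • v := by
    simp [Module.Basis.equivFun_symm_apply, Fin.sum_univ_two, hB]
  ext x
  simp only [Set.mem_preimage, Set.mem_univ_pi, Fin.forall_fin_two, Set.mem_Ioo]
  constructor
  · rintro ⟨t, s, ht₀, ht₁, hs₀, hs₁, rfl⟩
    rw [← hsymm, LinearEquiv.apply_symm_apply]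
    exact ⟨⟨ht₀, ht₁⟩, hs₀, hs₁⟩
  · rintro ⟨⟨ht₀, ht₁⟩, hs₀, hs₁⟩
    refine ⟨_, _, ht₀, ht₁, hs₀, hs₁, ?_⟩
    rw [← hsymm]
    nth_rw 1 [← (pairBasis huv).equivFun.symm_apply_apply x]
    congr 1
    ext i; fin_cases i <;> rfl

lemma isOpen_paraOpen (huv : LinearIndependent ℝ ![u, v]) : IsOpen (paraOpen u v) := by
  rw [paraOpen_eq_preimage huv]
  exact (isOpen_set_pi Set.finite_univ fun _ _ => isOpen_Ioo).preimage
    (LinearMap.continuous_of_finiteDimensional _)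

lemma convex_paraOpen (huv : LinearIndependent ℝ ![u, v]) : Convex ℝ (paraOpen u v) := by
  rw [paraOpen_eq_preimage huv]
  exact (convex_pi fun _ _ => convex_Ioo 0 1).linear_preimage _

lemma volume_paraOpen_lt_top (u v : Plane) : volume (paraOpen u v) < ⊤ := by
  refine (Metric.isBounded_iff_subset_closedBall 0).2 ⟨‖u‖ + ‖v‖, ?_⟩ |>.measure_lt_top
  rintro x ⟨t, s, ht₀, ht₁, hs₀, hs₁, rfl⟩
  rw [Metric.mem_closedBall, dist_zero_right]
  calc ‖t • u + s • v‖ ≤ t * ‖u‖ + s * ‖v‖ := by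
        refine (norm_add_le _ _).trans_eq ?_
        rw [norm_smul, norm_smul, Real.norm_of_nonneg ht₀.le, Real.norm_of_nonneg hs₀.le]
    _ ≤ ‖u‖ + ‖v‖ := by nlinarith [norm_nonneg u, norm_nonneg v]

lemma volume_span_singleton (w : Plane) : volume (Submodule.span ℝ {w} : Set Plane) = 0 := by
  refine Measure.addHaar_submodule _ _ fun h => ?_
  have := finrank_span_le_card (R := ℝ) ({w} : Set Plane)
  rw [h, finrank_top] at this
  simp at this

lemma para_ae_eq_paraOpen (u v : Plane) : para u v =ᵐ[volume] paraOpen u v := by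
  have hsub : paraOpen u v ⊆ para u v := fun _ ⟨t, s, ht₀, ht₁, hs₀, hs₁, hx⟩ =>
    ⟨t, s, ht₀.le, ht₁, hs₀.le, hs₁, hx⟩
  have hedges : para u v \ paraOpen u v ⊆
      (Submodule.span ℝ {u} : Set Plane) ∪ (Submodule.span ℝ {v} : Set Plane) := by
    rintro _ ⟨⟨t, s, ht₀, ht₁, hs₀, hs₁, rfl⟩, hx⟩
    rcases ht₀.eq_or_lt with rfl | ht₀
    · exact Or.inr (by simpa using Submodule.smul_mem _ s (Submodule.mem_span_singleton_self v))
    rcases hs₀.eq_or_lt with rfl | hs₀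
    · exact Or.inl (by simpa using Submodule.smul_mem _ t (Submodule.mem_span_singleton_self u))
    exact absurd ⟨t, s, ht₀, ht₁, hs₀, hs₁, rfl⟩ hx
  rw [ae_eq_set, Set.sdiff_eq_empty.2 hsub, measure_empty]
  exact ⟨measure_mono_null hedges
    (measure_union_null (volume_span_singleton u) (volume_span_singleton v)), rfl⟩

end Parallelogram

theorem stmt15_general (k : ℕ) (u v : Plane) (huv : LinearIndependent ℝ ![u, v])
    (c ctilde : Plane → Fin k) (hc : Measurable c) (hct : Measurable ctilde)
    (hagree : ∀ᵐ x ∂(volume.restrict (paraOpen u v)), ctilde x = c x) :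
    |pper ctilde u v - ptableSet c (paraOpen u v)| ≤
      2 * (volume (innerBorder (paraOpen u v) 1)).toReal /
        (volume (paraOpen u v)).toReal := by
  have hpara := para_ae_eq_paraOpen u v
  rw [pper, measure_congr hpara, setIntegral_congr_set hpara, one_div_mul_eq_div]
  exact abs_sub_ptableSet_le (isOpen_paraOpen huv).measurableSet (volume_paraOpen_lt_top u v)
    ((convex_paraOpen huv).addHaar_frontier volume) hc hct hagree

/-- Lemma 2 (finite table): if the open parallelogram `P = paraOpen u v` contains a unit
segment, `c` is a `k`-coloring of `P`, and `c̃` is its periodic extension (periodic with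
periods `u, v` and agreeing a.e. with `c` on `P`), then
`|p^per(c̃) − p^table(c)| ≤ 2·Area(K(P,1))/Area(P)`. -/
theorem stmt15 (k : ℕ) (u v : Plane) (huv : LinearIndependent ℝ ![u, v])
    (hseg : ∃ a b : Plane, a ∈ paraOpen u v ∧ b ∈ paraOpen u v ∧ dist a b = 1)
    (c ctilde : Plane → Fin k) (hc : Measurable c) (hct : Measurable ctilde)
    (hper : ∀ x : Plane, ctilde (x + u) = ctilde x ∧ ctilde (x + v) = ctilde x)
    (hagree : ∀ᵐ x ∂(volume.restrict (paraOpen u v)), ctilde x = c x) :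
    |pper ctilde u v - ptableSet c (paraOpen u v)| ≤
      2 * (volume (innerBorder (paraOpen u v) 1)).toReal /
        (volume (paraOpen u v)).toReal :=
  stmt15_general k u v huv c ctilde hc hct hagree

end
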